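/- arXiv:2203.10806 — 2 statements merged into one kernel-verified Lean document; each statement's English description precedes it below -/
import Mathlib

section
/- Fix r > 0 and real numbers θ_l < θ_c < θ_r with −√(2r) < θ_l and θ_r < √(2r). Then, as λ → ∞, λ^{4/3} · λ^{-7/3} (λ + λ^{-1/3} r)³ · Δ( λ/(λ + λ^{-1/3} r), λ^{-2/3}(θ_l, θ_c, θ_r) ) converges to (1/4)·(θ_c − θ_l)(θ_r − θ_c)(θ_r − θ_l). In particular, for all sufficiently large λ the indicator in Δ is equal to 1. -/
/-!
Substituting `t = λ^{-2/3} → 0⁺` turns the quantity into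
`(1 + r t²)³ t⁻³ Δ(1/(1 + r t²), t θ)`. For `0 ≤ θ < √(2r)` and small `t`,
`cos (t θ) ≥ 1 - t²θ²/2 > 1/(1 + r t²)`, so `t θ < arccos (1/(1 + r t²))`: the rescaled angles
eventually satisfy the indicator's constraints, and then each factor `t⁻¹ sin (t a)` of
`t⁻³ Δ` tends to `a`.
-/

open Real Filter

/-- `Δ(x, (φl, φc, φr))`: twice the area of the simplex spanned by the three unit vectors in
directions `φl, φc, φr`, with the indicator `1{−arccos x < φl < φc < φr < arccos x}`. -/
noncomputable def DeltaFn (x φl φc φr : ℝ) : ℝ :=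
  2 * |Real.sin ((φc - φr) / 2) * Real.sin ((φr - φl) / 2) * Real.sin ((φc - φl) / 2)| *
    (if -Real.arccos x < φl ∧ φl < φc ∧ φc < φr ∧ φr < Real.arccos x then 1 else 0)

open Topology

lemma tendsto_inv_mul_sin_mul (a : ℝ) :
    Tendsto (fun t => t⁻¹ * sin (t * a)) (𝓝[≠] 0) (𝓝 a) := by
  have h : HasDerivAt (fun t => sin (t * a)) a 0 := by
    simpa using ((hasDerivAt_id (0 : ℝ)).mul_const a).sin
  refine (hasDerivAt_iff_tendsto_slope.mp h).congr fun t => ?_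
  simp [slope_def_field, div_eq_inv_mul]

lemma tendsto_rpow_neg_atTop_nhdsGT_zero {y : ℝ} (hy : 0 < y) :
    Tendsto (fun x : ℝ => x ^ (-y)) atTop (𝓝[>] 0) :=
  tendsto_nhdsWithin_iff.mpr ⟨tendsto_rpow_neg_atTop hy,
    (eventually_gt_atTop 0).mono fun _ hx => rpow_pos_of_pos hx _⟩

lemma rescale_by_rpow_neg_two_thirds {lam : ℝ} (hlam : 0 < lam) (r : ℝ) :
    lam / (lam + lam ^ (-(1 : ℝ) / 3) * r) = 1 / (1 + r * (lam ^ (-(2 : ℝ) / 3)) ^ 2) ∧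
    lam ^ ((4 : ℝ) / 3) * (lam ^ (-(7 : ℝ) / 3) * (lam + lam ^ (-(1 : ℝ) / 3) * r) ^ 3) =
      (1 + r * (lam ^ (-(2 : ℝ) / 3)) ^ 2) ^ 3 / (lam ^ (-(2 : ℝ) / 3)) ^ 3 := by
  obtain ⟨u, hu, rfl⟩ : ∃ u, 0 < u ∧ lam = u ^ 3 :=
    ⟨lam ^ (1 / 3 : ℝ), by positivity, by rw [← rpow_natCast, ← rpow_mul hlam.le]; norm_num⟩
  simp only [← rpow_natCast_mul hu.le]
  norm_num [rpow_neg_one]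
  constructor <;> field_simp

lemma eventually_mul_lt_arccos {r θ : ℝ} (hθ : θ < √(2 * r)) :
    ∀ᶠ t in 𝓝[>] 0, t * θ < arccos (1 / (1 + r * t ^ 2)) := by
  rcases lt_or_ge θ 0 with hθ0 | hθ0
  · filter_upwards [self_mem_nhdsWithin] with t (ht : 0 < t)
    exact (mul_neg_of_pos_of_neg ht hθ0).trans_le (arccos_nonneg _)
  have hθr : θ ^ 2 < 2 * r := (lt_sqrt hθ0).mp hθ
  have hr : 0 < r := by nlinarith
  have hsmall : ∀ᶠ t in 𝓝 0, t * θ < π ∧ r * θ ^ 2 * t ^ 2 / 2 < r - θ ^ 2 / 2 := by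
    exact (ContinuousAt.eventually_lt (by fun_prop) (by fun_prop) (by simpa using pi_pos)).and
      (ContinuousAt.eventually_lt (by fun_prop) (by fun_prop) (by simp; linarith))
  filter_upwards [nhdsWithin_le_nhds hsmall, self_mem_nhdsWithin] with t ⟨hπ, hquad⟩ (ht : 0 < t)
  have hcos : 1 / (1 + r * t ^ 2) < cos (t * θ) := by
    calc 1 / (1 + r * t ^ 2) < 1 - (t * θ) ^ 2 / 2 := by
          rw [div_lt_iff₀ (by positivity)]
          nlinarith [mul_lt_mul_of_pos_left hquad (by positivity : 0 < t ^ 2)]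
      _ ≤ cos (t * θ) := one_sub_sq_div_two_le_cos
  calc t * θ = arccos (cos (t * θ)) := (arccos_cos (by positivity) hπ.le).symm
    _ < arccos (1 / (1 + r * t ^ 2)) :=
      arccos_lt_arccos (by linarith [show 0 < 1 / (1 + r * t ^ 2) by positivity]) hcos
        (cos_le_one _)

section Rescaled

variable {r θl θc θr : ℝ}

lemma eventually_angles_mem_Ioo_arccos (hlc : θl < θc) (hcr : θc < θr)
    (hl : -√(2 * r) < θl) (hrr : θr < √(2 * r)) :
    ∀ᶠ t in 𝓝[>] 0, -arccos (1 / (1 + r * t ^ 2)) < t * θl ∧ t * θl < t * θc ∧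
      t * θc < t * θr ∧ t * θr < arccos (1 / (1 + r * t ^ 2)) := by
  filter_upwards [eventually_mul_lt_arccos (θ := -θl) (by linarith),
    eventually_mul_lt_arccos hrr, self_mem_nhdsWithin] with t hleft hright (ht : 0 < t)
  rw [mul_neg] at hleft
  exact ⟨by linarith, by gcongr, by gcongr, hright⟩

lemma tendsto_DeltaFn_rescaled (hlc : θl < θc) (hcr : θc < θr)
    (hl : -√(2 * r) < θl) (hrr : θr < √(2 * r)) :
    Tendsto (fun t => (1 + r * t ^ 2) ^ 3 / t ^ 3 *
        DeltaFn (1 / (1 + r * t ^ 2)) (t * θl) (t * θc) (t * θr))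
      (𝓝[>] 0) (𝓝 (1 / 4 * (θc - θl) * (θr - θc) * (θr - θl))) := by
  have hsin (a : ℝ) : Tendsto (fun t => t⁻¹ * sin (t * a)) (𝓝[>] 0) (𝓝 a) :=
    (tendsto_inv_mul_sin_mul a).mono_left (nhdsGT_le_nhdsNE 0)
  have hfactor : Tendsto (fun t : ℝ => (1 + r * t ^ 2) ^ 3) (𝓝[>] 0) (𝓝 ((1 + r * 0 ^ 2) ^ 3)) :=
    tendsto_nhdsWithin_of_tendsto_nhds (Continuous.tendsto (by fun_prop) 0)
  have hprod : (θc - θr) / 2 * ((θr - θl) / 2) * ((θc - θl) / 2) ≤ 0 := by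
    have : 0 ≤ (θr - θl) / 2 * ((θc - θl) / 2) := mul_nonneg (by linarith) (by linarith)
    nlinarith
  convert (hfactor.mul ((((hsin ((θc - θr) / 2)).mul (hsin ((θr - θl) / 2))).mul
    (hsin ((θc - θl) / 2))).abs.const_mul 2)).congr' ?_ using 2
  · rw [abs_of_nonpos hprod]; ring
  filter_upwards [eventually_angles_mem_Ioo_arccos hlc hcr hl hrr, self_mem_nhdsWithin]
    with t hangles (ht : 0 < t)
  rw [DeltaFn, if_pos hangles]
  simp only [← mul_sub, mul_div_assoc, abs_mul, abs_inv, abs_of_pos ht]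
  field_simp

end Rescaled

theorem DeltaFn_tendsto_general (r θl θc θr : ℝ) (hlc : θl < θc) (hcr : θc < θr)
    (hl : -Real.sqrt (2 * r) < θl) (hrr : θr < Real.sqrt (2 * r)) :
    Tendsto (fun lam : ℝ =>
        lam ^ ((4 : ℝ) / 3) * (lam ^ (-(7 : ℝ) / 3) * (lam + lam ^ (-(1 : ℝ) / 3) * r) ^ 3 *
          DeltaFn (lam / (lam + lam ^ (-(1 : ℝ) / 3) * r))
            (lam ^ (-(2 : ℝ) / 3) * θl) (lam ^ (-(2 : ℝ) / 3) * θc) (lam ^ (-(2 : ℝ) / 3) * θr)))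
      atTop (nhds (1 / 4 * (θc - θl) * (θr - θc) * (θr - θl))) ∧
    ∀ᶠ lam : ℝ in atTop,
      -Real.arccos (lam / (lam + lam ^ (-(1 : ℝ) / 3) * r)) < lam ^ (-(2 : ℝ) / 3) * θl ∧
      lam ^ (-(2 : ℝ) / 3) * θl < lam ^ (-(2 : ℝ) / 3) * θc ∧
      lam ^ (-(2 : ℝ) / 3) * θc < lam ^ (-(2 : ℝ) / 3) * θr ∧
      lam ^ (-(2 : ℝ) / 3) * θr < Real.arccos (lam / (lam + lam ^ (-(1 : ℝ) / 3) * r)) := by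
  have hsub : Tendsto (fun lam : ℝ => lam ^ (-(2 : ℝ) / 3)) atTop (𝓝[>] 0) := by
    simpa only [neg_div] using tendsto_rpow_neg_atTop_nhdsGT_zero (by norm_num : (0 : ℝ) < 2 / 3)
  constructor
  · refine ((tendsto_DeltaFn_rescaled hlc hcr hl hrr).comp hsub).congr' ?_
    filter_upwards [eventually_gt_atTop 0] with lam hlam
    obtain ⟨hx, hscale⟩ := rescale_by_rpow_neg_two_thirds hlam r
    rw [Function.comp_apply, ← mul_assoc, hscale, hx]
  · filter_upwards [hsub.eventually (eventually_angles_mem_Ioo_arccos hlc hcr hl hrr),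
      eventually_gt_atTop 0] with lam hangles hlam
    rwa [(rescale_by_rpow_neg_two_thirds hlam r).1]

/-- As `λ → ∞`,
`λ^{4/3} · λ^{-7/3} (λ + λ^{-1/3} r)³ · Δ(λ/(λ + λ^{-1/3} r), λ^{-2/3} θ)` converges to
`(1/4)(θc − θl)(θr − θc)(θr − θl)`, and for all sufficiently large `λ` the indicator
appearing in `Δ` is equal to `1`. -/
theorem DeltaFn_tendsto (r θl θc θr : ℝ) (hr : 0 < r) (hlc : θl < θc) (hcr : θc < θr)
    (hl : -Real.sqrt (2 * r) < θl) (hrr : θr < Real.sqrt (2 * r)) :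
    Tendsto (fun lam : ℝ =>
        lam ^ ((4 : ℝ) / 3) * (lam ^ (-(7 : ℝ) / 3) * (lam + lam ^ (-(1 : ℝ) / 3) * r) ^ 3 *
          DeltaFn (lam / (lam + lam ^ (-(1 : ℝ) / 3) * r))
            (lam ^ (-(2 : ℝ) / 3) * θl) (lam ^ (-(2 : ℝ) / 3) * θc) (lam ^ (-(2 : ℝ) / 3) * θr)))
      atTop (nhds (1 / 4 * (θc - θl) * (θr - θc) * (θr - θl))) ∧
    ∀ᶠ lam : ℝ in atTop,
      -Real.arccos (lam / (lam + lam ^ (-(1 : ℝ) / 3) * r)) < lam ^ (-(2 : ℝ) / 3) * θl ∧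
      lam ^ (-(2 : ℝ) / 3) * θl < lam ^ (-(2 : ℝ) / 3) * θc ∧
      lam ^ (-(2 : ℝ) / 3) * θc < lam ^ (-(2 : ℝ) / 3) * θr ∧
      lam ^ (-(2 : ℝ) / 3) * θr < Real.arccos (lam / (lam + lam ^ (-(1 : ℝ) / 3) * r)) :=
  DeltaFn_tendsto_general r θl θc θr hlc hcr hl hrr
end

section
/- For k ≥ 0 set q_k = 6/((k+2)(k+3)) (so that q₀ = 1). Suppose (t_k)_{k≥0} is a sequence of real numbers with t₀ = 1 and t_k = q_{3k} · ∑_{i=0}^{k} t_i for every k ≥ 1. Then for every k ≥ 0, t_k = q_{3k} · ∏_{i=1}^{k} 1/(1 − q_{3i}), and moreover k! · t_k = q_{3k} · ( ∏_{j=0}^{k−1} (5/3 + j) ) · ( ∏_{j=0}^{k−1} (2 + j)/(8/3 + j) ). -/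
/-- The moment recursion: with `q_k = 6/((k+2)(k+3))`, if `t₀ = 1` and
`t_k = q_{3k} ∑_{i=0}^k t_i` for `k ≥ 1`, then `t_k = q_{3k} ∏_{i=1}^k (1 − q_{3i})⁻¹` and
`k! t_k = q_{3k} (∏_{j=0}^{k−1} (5/3 + j)) (∏_{j=0}^{k−1} (2 + j)/(8/3 + j))`. -/
theorem moment_recursion_solution (q t : ℕ → ℝ)
    (hq : ∀ k, q k = 6 / (((k : ℝ) + 2) * ((k : ℝ) + 3)))
    (ht0 : t 0 = 1)
    (htrec : ∀ k, 1 ≤ k → t k = q (3 * k) * ∑ i ∈ Finset.range (k + 1), t i) :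
    ∀ k, t k = q (3 * k) * ∏ i ∈ Finset.Icc 1 k, (1 - q (3 * i))⁻¹ ∧
      (Nat.factorial k : ℝ) * t k =
        q (3 * k) * (∏ j ∈ Finset.range k, ((5 : ℝ) / 3 + (j : ℝ))) *
          ∏ j ∈ Finset.range k, ((2 : ℝ) + (j : ℝ)) / ((8 : ℝ) / 3 + (j : ℝ)) := by
  have hq3 : ∀ k : ℕ, q (3 * k) = 6 / ((3 * (k : ℝ) + 2) * (3 * (k : ℝ) + 3)) := by
    intro k; rw [hq]; push_cast; ring_nf
  have hpos : ∀ k : ℕ, 1 ≤ k → 0 < 1 - q (3 * k) := by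
    intro k hk
    have hk' : (1 : ℝ) ≤ (k : ℝ) := by exact_mod_cast hk
    rw [hq3, sub_pos, div_lt_one (by nlinarith)]
    nlinarith
  have hsum : ∀ k, ∑ i ∈ Finset.range (k + 1), t i
      = ∏ i ∈ Finset.Icc 1 k, (1 - q (3 * i))⁻¹ := by
    intro k
    induction k with
    | zero => simp [ht0]
    | succ n ih =>
      have hne : 1 - q (3 * (n + 1)) ≠ 0 := ne_of_gt (hpos (n + 1) (by omega))
      have ht : t (n + 1) = q (3 * (n + 1)) * ∑ i ∈ Finset.range (n + 1 + 1), t i :=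
        htrec (n + 1) (by omega)
      have hs : ∑ i ∈ Finset.range (n + 1 + 1), t i
          = (∑ i ∈ Finset.range (n + 1), t i) + t (n + 1) := Finset.sum_range_succ t (n + 1)
      rw [ih, ht] at hs
      have h1 : (1 - q (3 * (n + 1))) * ∑ i ∈ Finset.range (n + 1 + 1), t i
          = ∏ i ∈ Finset.Icc 1 n, (1 - q (3 * i))⁻¹ := by linear_combination hs
      rw [Finset.prod_Icc_succ_top (by omega : 1 ≤ n + 1),
        eq_mul_inv_iff_mul_eq₀ hne]
      linear_combination h1
  have hfirst : ∀ k, t k = q (3 * k) * ∏ i ∈ Finset.Icc 1 k, (1 - q (3 * i))⁻¹ := by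
    intro k
    rcases Nat.eq_zero_or_pos k with rfl | hk
    · simp [ht0, hq]; norm_num
    · rw [htrec k hk, hsum k]
  intro k
  refine ⟨hfirst k, ?_⟩
  have hfact : ∀ k, (Nat.factorial k : ℝ) * ∏ i ∈ Finset.Icc 1 k, (1 - q (3 * i))⁻¹
      = (∏ j ∈ Finset.range k, ((5 : ℝ) / 3 + (j : ℝ)))
        * ∏ j ∈ Finset.range k, ((2 : ℝ) + (j : ℝ)) / ((8 : ℝ) / 3 + (j : ℝ)) := by
    intro k
    induction k with
    | zero => simp
    | succ n ih =>
      rw [Finset.prod_Icc_succ_top (by omega : 1 ≤ n + 1),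
        Finset.prod_range_succ, Finset.prod_range_succ, Nat.factorial_succ]
      push_cast
      have hne : 1 - q (3 * (n + 1)) ≠ 0 := ne_of_gt (hpos (n + 1) (by omega))
      have key : ((n : ℝ) + 1) * (1 - q (3 * (n + 1)))⁻¹
          = ((5 : ℝ) / 3 + (n : ℝ)) * (((2 : ℝ) + (n : ℝ)) / ((8 : ℝ) / 3 + (n : ℝ))) := by
        rw [hq3] at hne ⊢
        push_cast at hne ⊢
        have h8 : ((8 : ℝ) / 3 + (n : ℝ)) ≠ 0 := by positivity
        have hd : (3 * ((n : ℝ) + 1) + 2) * (3 * ((n : ℝ) + 1) + 3) ≠ 0 := by positivity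
        field_simp at hne ⊢
        ring_nf
        ring_nf at hne
        field_simp
        ring
      calc ((n : ℝ) + 1) * (Nat.factorial n : ℝ)
            * ((∏ i ∈ Finset.Icc 1 n, (1 - q (3 * i))⁻¹) * (1 - q (3 * (n + 1)))⁻¹)
          = ((Nat.factorial n : ℝ) * ∏ i ∈ Finset.Icc 1 n, (1 - q (3 * i))⁻¹)
            * (((n : ℝ) + 1) * (1 - q (3 * (n + 1)))⁻¹) := by ring
        _ = _ := by rw [ih, key]; ring
  rw [hfirst k, ← mul_assoc]
  linear_combination (q (3 * k)) * hfact k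
end
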